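/- Let d, n be positive integers with n ≥ 4, let σ² = 1/d, and let x₁, …, xₙ be independent random vectors in ℝᵈ, each with i.i.d. N(0, σ²) coordinates. Let S₁, S₂, S₃ be pairwise disjoint subsets of {1,…,n}. There is a universal constant c > 0 such that for every β > 1 and every δ ∈ (0, 1/10), if √d ≥ c·β·log²(nd/δ), then with probability at least 1 − δ the following holds simultaneously: for all indices i₁ ∈ S₁, all distinct i₂, i₂′ ∈ S₂, and all i₃ ∈ S₃, |⟨x_{i₃} + x_{i₁}, x_{i₃} + x_{i₂}⟩| ≥ β · |⟨x_{i₃} + x_{i₁}, x_{i₂} + x_{i₂′}⟩|. -/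

import Mathlib

/-!
Write `t = 1 / (9 β)`. For independent `x a ~ N(0, I / d)`, Chernoff bounds with the explicit
Gaussian moment generating functions `E exp (l ⟪z, w⟫) = (1 - l² / d²) ^ (-d / 2)` and
`E exp (-l ‖z‖²) = (1 + 2 l / d) ^ (-d / 2)` show that, outside an event of probability at most
`3 n² exp (-d t² / 4)`, all pairwise inner products are below `t` in absolute value and all
squared norms exceed `1 - 2 t`. There, expanding the mixtures gives
`|⟪x₃ + x₁, x₂ + x₂'⟫| ≤ 4 t` and `|⟪x₃ + x₁, x₃ + x₂⟫| ≥ 1 - 5 t`, whose ratio is at least `β`,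
while `√d ≥ 9 β log² (n d / δ)` pushes the exceptional probability below `δ`.
-/

open MeasureTheory ProbabilityTheory Real
open scoped NNReal

theorem pow_inv_sqrt_le_exp {a : ℝ} (ha : 0 < a) (n : ℕ) :
    (√a)⁻¹ ^ n ≤ exp (n * (a⁻¹ - 1) / 2) := by
  have h : (√a)⁻¹ ≤ exp ((a⁻¹ - 1) / 2) := by
    rw [← sqrt_inv, exp_half]
    exact sqrt_le_sqrt (by simpa using add_one_le_exp (a⁻¹ - 1))
  calc (√a)⁻¹ ^ n ≤ exp ((a⁻¹ - 1) / 2) ^ n := by gcongr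
    _ = exp (n * (a⁻¹ - 1) / 2) := by rw [← exp_nat_mul]; ring_nf

section GaussianMGF

variable {v : ℝ≥0}

/-- Both sides vanish when `1 ≤ 2 * l * v`: the integral diverges and `√` of a nonpositive number
is `0`. -/
theorem integral_exp_mul_sq_gaussianReal (hv : v ≠ 0) (l : ℝ) :
    ∫ x, exp (l * x ^ 2) ∂gaussianReal 0 v = (√(1 - 2 * l * v))⁻¹ := by
  have hpdf (x : ℝ) : gaussianPDFReal 0 v x • exp (l * x ^ 2)
      = (√(2 * π * v))⁻¹ * exp (-((2 * (v : ℝ))⁻¹ - l) * x ^ 2) := by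
    rw [gaussianPDFReal, smul_eq_mul, mul_assoc, ← exp_add]
    congr 2
    field_simp
    ring
  rw [integral_gaussianReal_eq_integral_smul hv]
  simp_rw [hpdf]
  rw [integral_const_mul, integral_gaussian, ← sqrt_inv, ← sqrt_mul (by positivity), ← sqrt_inv]
  congr 1
  field_simp

theorem integrable_exp_mul_sq_gaussianReal (hv : v ≠ 0) {l : ℝ} (hl : 2 * l * v < 1) :
    Integrable (fun x ↦ exp (l * x ^ 2)) (gaussianReal 0 v) := by
  refine mgf_pos_iff.mp ?_
  rw [mgf, integral_exp_mul_sq_gaussianReal hv]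
  exact inv_pos.mpr (sqrt_pos.mpr (by linarith))

end GaussianMGF

section GaussianVector

open Matrix

variable {ι : Type*} [Fintype ι] {v : ℝ≥0}

local notation "ν" => Measure.pi fun _ : ι ↦ gaussianReal 0 v

theorem exp_mul_dotProduct_self (l : ℝ) (ω : ι → ℝ) :
    exp (l * (ω ⬝ᵥ ω)) = ∏ j, exp (l * ω j ^ 2) := by
  simp only [dotProduct, Finset.mul_sum, exp_sum, sq]

theorem integral_exp_mul_dotProduct_self_pi (hv : v ≠ 0) (l : ℝ) :
    ∫ ω, exp (l * (ω ⬝ᵥ ω)) ∂ν = (√(1 - 2 * l * v))⁻¹ ^ Fintype.card ι := by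
  simp_rw [exp_mul_dotProduct_self]
  rw [integral_fintype_prod_eq_pow (fun x ↦ exp (l * x ^ 2)),
    integral_exp_mul_sq_gaussianReal hv]

theorem integrable_exp_mul_dotProduct_self_pi (hv : v ≠ 0) {l : ℝ} (hl : 2 * l * v < 1) :
    Integrable (fun ω ↦ exp (l * (ω ⬝ᵥ ω))) ν := by
  refine mgf_pos_iff.mp ?_
  rw [mgf, integral_exp_mul_dotProduct_self_pi hv]
  exact pow_pos (inv_pos.mpr (sqrt_pos.mpr (by linarith))) _

theorem integral_exp_mul_dotProduct_pi (l : ℝ) (z : ι → ℝ) :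
    ∫ w, exp (l * (z ⬝ᵥ w)) ∂ν = exp (v * l ^ 2 / 2 * (z ⬝ᵥ z)) := by
  have hprod (w : ι → ℝ) : exp (l * (z ⬝ᵥ w)) = ∏ j, exp ((l * z j) * w j) := by
    simp only [dotProduct, Finset.mul_sum, exp_sum, mul_assoc]
  simp_rw [hprod]
  rw [integral_fintype_prod_eq_prod (fun j x ↦ exp ((l * z j) * x))]
  have hmgf (t : ℝ) : ∫ x, exp (t * x) ∂gaussianReal 0 v = exp (v * t ^ 2 / 2) := by
    simpa [mgf] using congrFun (mgf_fun_id_gaussianReal (μ := 0) (v := v)) t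
  simp only [hmgf, ← exp_sum, dotProduct, Finset.mul_sum]
  congr 1
  exact Finset.sum_congr rfl fun j _ ↦ by ring

theorem integrable_exp_mul_dotProduct_prod (hv : v ≠ 0) {l : ℝ} (hl : (v * l) ^ 2 < 1) :
    Integrable (fun p : (ι → ℝ) × (ι → ℝ) ↦ exp (l * (p.1 ⬝ᵥ p.2))) (Measure.prod ν ν) := by
  have hl' : 2 * (v * l ^ 2 / 2) * v < 1 := by linarith
  have hmeas : Measurable fun p : (ι → ℝ) × (ι → ℝ) ↦ exp (l * (p.1 ⬝ᵥ p.2)) := by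
    unfold dotProduct; fun_prop
  refine (integrable_prod_iff hmeas.aestronglyMeasurable).mpr ⟨.of_forall fun z ↦ ?_, ?_⟩
  · refine mgf_pos_iff.mp ?_
    rw [mgf, integral_exp_mul_dotProduct_pi]
    exact exp_pos _
  · simp only [norm_of_nonneg (exp_pos _).le, integral_exp_mul_dotProduct_pi]
    exact integrable_exp_mul_dotProduct_self_pi hv hl'

theorem integral_exp_mul_dotProduct_prod (hv : v ≠ 0) {l : ℝ} (hl : (v * l) ^ 2 < 1) :
    ∫ p : (ι → ℝ) × (ι → ℝ), exp (l * (p.1 ⬝ᵥ p.2)) ∂(Measure.prod ν ν)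
      = (√(1 - (v * l) ^ 2))⁻¹ ^ Fintype.card ι := by
  rw [integral_prod _ (integrable_exp_mul_dotProduct_prod hv hl)]
  simp only [integral_exp_mul_dotProduct_pi, integral_exp_mul_dotProduct_self_pi hv]
  congr 3
  ring

theorem measureReal_dotProduct_self_le_one_sub_le (hv : (Fintype.card ι : ℝ) * v = 1)
    {ε : ℝ} (hε : 0 ≤ ε) :
    (ν).real {ω | ω ⬝ᵥ ω ≤ 1 - ε} ≤ exp (-(Fintype.card ι : ℝ) * ε ^ 2 / 8) := by
  set d : ℝ := (Fintype.card ι : ℝ)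
  have hv0 : v ≠ 0 := by rintro rfl; simp at hv
  set l := ε * d / 4
  have hlv : 2 * -l * v = -(ε / 2) := by linear_combination (-ε / 2) * hv
  refine (measure_le_le_exp_mul_mgf (1 - ε) (t := -l) (neg_nonpos.mpr (by positivity)) ?_).trans ?_
  · exact integrable_exp_mul_dotProduct_self_pi hv0 (by rw [hlv]; linarith)
  rw [mgf, integral_exp_mul_dotProduct_self_pi hv0, hlv, sub_neg_eq_add]
  calc exp (- -l * (1 - ε)) * (√(1 + ε / 2))⁻¹ ^ Fintype.card ι
      ≤ exp (- -l * (1 - ε)) * exp (d * ((1 + ε / 2)⁻¹ - 1) / 2) := by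
        gcongr
        exact pow_inv_sqrt_le_exp (by positivity) _
    _ = exp (- -l * (1 - ε) + d * ((1 + ε / 2)⁻¹ - 1) / 2) := (exp_add _ _).symm
    _ ≤ exp (-d * ε ^ 2 / 8) := by
        gcongr
        have hgap : - -l * (1 - ε) + d * ((1 + ε / 2)⁻¹ - 1) / 2 - -d * ε ^ 2 / 8
            = -(d * ε ^ 3 / (8 * (2 + ε))) := by
          field_simp
          ring
        have : 0 ≤ d * ε ^ 3 / (8 * (2 + ε)) := by positivity
        linarith

theorem exp_mul_mgf_dotProduct_prod_le (hv : (Fintype.card ι : ℝ) * v = 1)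
    {t : ℝ} (ht₀ : 0 ≤ t) (ht : t ≤ 1 / 2) {s : ℝ} (hs : (v * s) ^ 2 = t ^ 2) :
    exp (-(t * Fintype.card ι) * t) * mgf (fun p ↦ p.1 ⬝ᵥ p.2) (Measure.prod ν ν) s
      ≤ exp (-(Fintype.card ι : ℝ) * t ^ 2 / 4) := by
  set d : ℝ := (Fintype.card ι : ℝ)
  have hv0 : v ≠ 0 := by rintro rfl; simp at hv
  have ht₁ : 0 < 1 - t ^ 2 := by nlinarith
  rw [mgf, integral_exp_mul_dotProduct_prod hv0 (by rw [hs]; nlinarith), hs]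
  calc exp (-(t * d) * t) * (√(1 - t ^ 2))⁻¹ ^ Fintype.card ι
      ≤ exp (-(t * d) * t) * exp (d * ((1 - t ^ 2)⁻¹ - 1) / 2) := by
        gcongr
        exact pow_inv_sqrt_le_exp ht₁ _
    _ = exp (-(t * d) * t + d * ((1 - t ^ 2)⁻¹ - 1) / 2) := (exp_add _ _).symm
    _ ≤ exp (-d * t ^ 2 / 4) := by
        gcongr
        have hgap : -(t * d) * t + d * ((1 - t ^ 2)⁻¹ - 1) / 2 - -d * t ^ 2 / 4
            = -(d * t ^ 2 * (1 - 3 * t ^ 2) / (4 * (1 - t ^ 2))) := by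
          field_simp
          ring
        have : 0 ≤ d * t ^ 2 * (1 - 3 * t ^ 2) / (4 * (1 - t ^ 2)) := by
          have : 0 ≤ 1 - 3 * t ^ 2 := by nlinarith
          positivity
        linarith

theorem measureReal_le_abs_dotProduct_le (hv : (Fintype.card ι : ℝ) * v = 1)
    {t : ℝ} (ht₀ : 0 ≤ t) (ht : t ≤ 1 / 2) :
    (Measure.prod ν ν).real {p | t ≤ |p.1 ⬝ᵥ p.2|}
      ≤ 2 * exp (-(Fintype.card ι : ℝ) * t ^ 2 / 4) := by
  set d : ℝ := (Fintype.card ι : ℝ)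
  set X : (ι → ℝ) × (ι → ℝ) → ℝ := fun p ↦ p.1 ⬝ᵥ p.2
  have hv0 : v ≠ 0 := by rintro rfl; simp at hv
  set l := t * d
  have hvl : v * l = t := by linear_combination t * hv
  have hint (s : ℝ) (hs : (v * s) ^ 2 = t ^ 2) :
      Integrable (fun p ↦ exp (s * X p)) (Measure.prod ν ν) :=
    integrable_exp_mul_dotProduct_prod hv0 (by rw [hs]; nlinarith)
  have hupper : (Measure.prod ν ν).real {p | t ≤ X p} ≤ exp (-d * t ^ 2 / 4) :=
    (measure_ge_le_exp_mul_mgf t (by positivity) (hint l (by rw [hvl]))).trans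
      (exp_mul_mgf_dotProduct_prod_le hv ht₀ ht (by rw [hvl]))
  have hlower : (Measure.prod ν ν).real {p | X p ≤ -t} ≤ exp (-d * t ^ 2 / 4) := by
    refine (measure_le_le_exp_mul_mgf (-t) (neg_nonpos.mpr (by positivity))
      (hint (-l) (by rw [mul_neg, neg_sq, hvl]))).trans ?_
    rw [show -(-l) * -t = -l * t by ring]
    exact exp_mul_mgf_dotProduct_prod_le hv ht₀ ht (by rw [mul_neg, neg_sq, hvl])
  have hsplit : {p | t ≤ |X p|} ⊆ {p | t ≤ X p} ∪ {p | X p ≤ -t} := by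
    intro p hp
    rcases le_abs'.mp (show t ≤ |X p| from hp) with h | h
    · exact Or.inr h
    · exact Or.inl h
  calc (Measure.prod ν ν).real {p | t ≤ |X p|}
      ≤ (Measure.prod ν ν).real {p | t ≤ X p} + (Measure.prod ν ν).real {p | X p ≤ -t} :=
        (measureReal_mono hsplit).trans (measureReal_union_le _ _)
    _ ≤ 2 * exp (-d * t ^ 2 / 4) := by linarith

variable {Ω : Type*} [MeasurableSpace Ω] {P : Measure Ω}

theorem measureReal_dotProduct_self_le_one_sub_le_of_map_eq {X : Ω → ι → ℝ}
    (hX : P.map X = ν) (hv : (Fintype.card ι : ℝ) * v = 1) {ε : ℝ} (hε : 0 ≤ ε) :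
    P.real {ω | X ω ⬝ᵥ X ω ≤ 1 - ε} ≤ exp (-(Fintype.card ι : ℝ) * ε ^ 2 / 8) := by
  have hXm : AEMeasurable X P := aemeasurable_of_map_neZero (by rw [hX]; infer_instance)
  have hs : MeasurableSet {ω : ι → ℝ | ω ⬝ᵥ ω ≤ 1 - ε} :=
    measurableSet_le (by unfold dotProduct; fun_prop) measurable_const
  change P.real (X ⁻¹' {w | w ⬝ᵥ w ≤ 1 - ε}) ≤ _
  rw [← map_measureReal_apply_of_aemeasurable hXm hs, hX]
  exact measureReal_dotProduct_self_le_one_sub_le hv hε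

theorem measureReal_le_abs_dotProduct_le_of_indepFun [IsFiniteMeasure P] {X Y : Ω → ι → ℝ}
    (hXY : IndepFun X Y P) (hX : P.map X = ν) (hY : P.map Y = ν)
    (hv : (Fintype.card ι : ℝ) * v = 1) {t : ℝ} (ht₀ : 0 ≤ t) (ht : t ≤ 1 / 2) :
    P.real {ω | t ≤ |X ω ⬝ᵥ Y ω|} ≤ 2 * exp (-(Fintype.card ι : ℝ) * t ^ 2 / 4) := by
  have hXm : AEMeasurable X P := aemeasurable_of_map_neZero (by rw [hX]; infer_instance)
  have hYm : AEMeasurable Y P := aemeasurable_of_map_neZero (by rw [hY]; infer_instance)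
  have hjoint : P.map (fun ω ↦ (X ω, Y ω)) = Measure.prod ν ν := by
    rw [(indepFun_iff_map_prod_eq_prod_map_map hXm hYm).mp hXY, hX, hY]
  have hs : MeasurableSet {p : (ι → ℝ) × (ι → ℝ) | t ≤ |p.1 ⬝ᵥ p.2|} :=
    measurableSet_le measurable_const (by unfold dotProduct; fun_prop)
  change P.real ((fun ω ↦ (X ω, Y ω)) ⁻¹' {p | t ≤ |p.1 ⬝ᵥ p.2|}) ≤ _
  rw [← map_measureReal_apply_of_aemeasurable (hXm.prodMk hYm) hs, hjoint]
  exact measureReal_le_abs_dotProduct_le hv ht₀ ht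

end GaussianVector

section NearOrthonormal

open Matrix

variable {κ ι : Type*} [Fintype ι]

def NearOrthonormal (u : κ → ι → ℝ) (t : ℝ) : Prop :=
  (∀ a b, a ≠ b → |u a ⬝ᵥ u b| < t) ∧ ∀ a, 1 - 2 * t < u a ⬝ᵥ u a

theorem NearOrthonormal.mul_abs_dotProduct_le {u : κ → ι → ℝ} {t β : ℝ}
    (hu : NearOrthonormal u t) (hβ : 0 ≤ β) (hβt : 4 * β * t + 5 * t ≤ 1)
    {i₁ i₂ i₂' i₃ : κ} (h₁₂ : i₁ ≠ i₂) (h₁₂' : i₁ ≠ i₂') (h₁₃ : i₁ ≠ i₃)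
    (h₃₂ : i₃ ≠ i₂) (h₃₂' : i₃ ≠ i₂') :
    β * |(u i₃ + u i₁) ⬝ᵥ (u i₂ + u i₂')| ≤ |(u i₃ + u i₁) ⬝ᵥ (u i₃ + u i₂)| := by
  obtain ⟨hoff, hdiag⟩ := hu
  have e₃₂ := abs_lt.mp (hoff _ _ h₃₂)
  have e₃₂' := abs_lt.mp (hoff _ _ h₃₂')
  have e₁₂ := abs_lt.mp (hoff _ _ h₁₂)
  have e₁₂' := abs_lt.mp (hoff _ _ h₁₂')
  have e₁₃ := abs_lt.mp (hoff _ _ h₁₃)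
  have e₃₃ := hdiag i₃
  have hsmall : |(u i₃ + u i₁) ⬝ᵥ (u i₂ + u i₂')| ≤ 4 * t := by
    simp only [add_dotProduct, dotProduct_add]
    exact abs_le.mpr ⟨by linarith, by linarith⟩
  have hlarge : 1 - 5 * t ≤ |(u i₃ + u i₁) ⬝ᵥ (u i₃ + u i₂)| := by
    simp only [add_dotProduct, dotProduct_add]
    exact le_abs.mpr (Or.inl (by linarith))
  calc β * |(u i₃ + u i₁) ⬝ᵥ (u i₂ + u i₂')| ≤ β * (4 * t) := by gcongr
    _ ≤ 1 - 5 * t := by linarith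
    _ ≤ _ := hlarge

variable [Fintype κ] {Ω : Type*} [MeasurableSpace Ω] {P : Measure Ω} [IsProbabilityMeasure P]
  {v : ℝ≥0}

theorem measureReal_not_nearOrthonormal_le {x : κ → Ω → ι → ℝ} (hx : iIndepFun x P)
    (hmap : ∀ a, P.map (x a) = Measure.pi fun _ : ι ↦ gaussianReal 0 v)
    (hv : (Fintype.card ι : ℝ) * v = 1) {t : ℝ} (ht₀ : 0 ≤ t) (ht : t ≤ 1 / 2) :
    P.real {ω | ¬NearOrthonormal (fun a ↦ x a ω) t}
      ≤ 3 * (Fintype.card κ : ℝ) ^ 2 * exp (-(Fintype.card ι : ℝ) * t ^ 2 / 4) := by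
  set n : ℝ := (Fintype.card κ : ℝ)
  set e := exp (-(Fintype.card ι : ℝ) * t ^ 2 / 4)
  set pairBad : κ → κ → Set Ω := fun a b ↦ {ω | a ≠ b ∧ t ≤ |x a ω ⬝ᵥ x b ω|}
  set normBad : κ → Set Ω := fun a ↦ {ω | x a ω ⬝ᵥ x a ω ≤ 1 - 2 * t}
  have hpair (a b : κ) : P.real (pairBad a b) ≤ 2 * e := by
    by_cases hab : a = b
    · simp only [pairBad, hab, ne_eq, not_true_eq_false, false_and, Set.ofPred_false,
        measureReal_empty]
      positivity
    · refine (measureReal_mono fun ω hω ↦ hω.2).trans ?_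
      exact measureReal_le_abs_dotProduct_le_of_indepFun (hx.indepFun hab) (hmap a) (hmap b)
        hv ht₀ ht
  have hnorm (a : κ) : P.real (normBad a) ≤ e := by
    refine (measureReal_dotProduct_self_le_one_sub_le_of_map_eq (hmap a) hv
      (by positivity : (0 : ℝ) ≤ 2 * t)).trans (exp_le_exp.mpr ?_)
    have : (0 : ℝ) ≤ Fintype.card ι * t ^ 2 := by positivity
    nlinarith
  have hbad : {ω | ¬NearOrthonormal (fun a ↦ x a ω) t}
      = (⋃ a, ⋃ b, pairBad a b) ∪ ⋃ a, normBad a := by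
    ext ω
    simp only [NearOrthonormal, pairBad, normBad, Set.mem_ofPred_eq,
      Set.mem_union, Set.mem_iUnion, not_and_or, not_forall, not_lt, exists_prop]
  rw [hbad]
  calc _ ≤ ∑ a, ∑ b, P.real (pairBad a b) + ∑ a, P.real (normBad a) := by
        refine (measureReal_union_le _ _).trans (add_le_add ?_ (measureReal_iUnion_fintype_le _))
        exact (measureReal_iUnion_fintype_le _).trans
          (Finset.sum_le_sum fun a _ ↦ measureReal_iUnion_fintype_le _)
    _ ≤ ∑ _a : κ, ∑ _b : κ, 2 * e + ∑ _a : κ, e := by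
        gcongr with a _ b _ a _
        exacts [hpair a b, hnorm a]
    _ = 2 * n ^ 2 * e + n * e := by
        simp only [Finset.sum_const, Finset.card_univ, nsmul_eq_mul, n]
        ring
    _ ≤ 3 * n ^ 2 * e := by
        have : n ≤ n ^ 2 := by
          simp only [n]; exact_mod_cast Nat.le_self_pow two_ne_zero (Fintype.card κ)
        nlinarith [exp_pos (-(Fintype.card ι : ℝ) * t ^ 2 / 4)]

theorem one_sub_le_measureReal_nearOrthonormal {x : κ → Ω → ι → ℝ} (hx : iIndepFun x P)
    (hmap : ∀ a, P.map (x a) = Measure.pi fun _ : ι ↦ gaussianReal 0 v)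
    (hv : (Fintype.card ι : ℝ) * v = 1) {t : ℝ} (ht₀ : 0 ≤ t) (ht : t ≤ 1 / 2) :
    1 - 3 * (Fintype.card κ : ℝ) ^ 2 * exp (-(Fintype.card ι : ℝ) * t ^ 2 / 4)
      ≤ P.real {ω | NearOrthonormal (fun a ↦ x a ω) t} := by
  set good := {ω | NearOrthonormal (fun a ↦ x a ω) t}
  have hbad : P.real goodᶜ ≤ _ := measureReal_not_nearOrthonormal_le hx hmap hv ht₀ ht
  have htotal := measureReal_union_le (μ := P) good goodᶜ
  rw [Set.union_compl_self, probReal_univ] at htotal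
  linarith

end NearOrthonormal

theorem three_mul_sq_mul_exp_le_of_le_sqrt {n d : ℕ} {β δ : ℝ} (hn : 0 < n) (hd : 0 < d)
    (hβ : 0 < β) (hδ₀ : 0 < δ) (hδ : δ < 1 / 10) (h : 9 * β * log (n * d / δ) ^ 2 ≤ √d) :
    3 * (n : ℝ) ^ 2 * exp (-(d : ℝ) * (9 * β)⁻¹ ^ 2 / 4) ≤ δ := by
  set L := log (n * d / δ)
  have hn₁ : (1 : ℝ) ≤ n := by exact_mod_cast hn
  have hd₁ : (1 : ℝ) ≤ d := by exact_mod_cast hd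
  have hL : 2 ≤ L := by
    rw [le_log_iff_exp_le (by positivity), le_div_iff₀ hδ₀]
    have : exp 2 < 9 := by
      rw [show (2 : ℝ) = 1 + 1 by norm_num, exp_add]
      nlinarith [exp_one_lt_three, exp_pos 1]
    nlinarith
  have hdL : 81 * β ^ 2 * L ^ 4 ≤ d := by
    have := (le_sqrt (by positivity) (Nat.cast_nonneg _)).mp h
    linarith
  have hlog : log (3 * n ^ 2 / δ) ≤ 2 * L := by
    rw [show 2 * L = log ((n * d / δ) ^ 2) by rw [log_pow]; norm_num [L]]
    refine log_le_log (by positivity) ?_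
    rw [div_pow, div_le_div_iff₀ hδ₀ (by positivity)]
    have : 3 * δ ≤ (d : ℝ) ^ 2 := by nlinarith
    nlinarith [mul_le_mul_of_nonneg_left this (by positivity : (0 : ℝ) ≤ n ^ 2 * δ)]
  have hexponent : 2 * L ≤ d * (9 * β)⁻¹ ^ 2 / 4 := by
    rw [show (d : ℝ) * (9 * β)⁻¹ ^ 2 / 4 = d / (324 * β ^ 2) by field_simp; ring,
      le_div_iff₀ (by positivity)]
    have hL4 : 8 * L ≤ L ^ 4 := by
      have := pow_le_pow_left₀ (by norm_num) hL 3
      nlinarith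
    nlinarith [mul_le_mul_of_nonneg_left hL4 (by positivity : (0 : ℝ) ≤ 81 * β ^ 2)]
  calc 3 * (n : ℝ) ^ 2 * exp (-(d : ℝ) * (9 * β)⁻¹ ^ 2 / 4)
      ≤ 3 * n ^ 2 * exp (-log (3 * n ^ 2 / δ)) := by gcongr; linarith
    _ = δ := by rw [exp_neg, exp_log (by positivity)]; field_simp

/-- Corollary A.2: when the ambient dimension `d` is large enough relative to `β` and
`log (n d / δ)`, inner products between mixtures sharing a common image exceed those of
mixtures of four distinct images by any prescribed factor `β`. -/
theorem mixup_multiple_use_detection :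
    ∃ c : ℝ, 0 < c ∧
      ∀ (d n : ℕ), 0 < d → 4 ≤ n →
      ∀ (Ω : Type) (_ : MeasureSpace Ω),
        IsProbabilityMeasure (ℙ : Measure Ω) →
      ∀ x : Fin n → Ω → (Fin d → ℝ),
        iIndepFun x ℙ →
        (∀ i, Measure.map (x i) ℙ =
          Measure.pi (fun _ : Fin d => gaussianReal 0 (1 / d : ℝ≥0))) →
      ∀ S₁ S₂ S₃ : Finset (Fin n),
        Disjoint S₁ S₂ → Disjoint S₁ S₃ → Disjoint S₂ S₃ →
      ∀ β : ℝ, 1 < β →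
      ∀ δ : ℝ, 0 < δ → δ < 1 / 10 →
        c * β * (Real.log (n * d / δ)) ^ 2 ≤ Real.sqrt d →
        1 - δ ≤
          (ℙ {ω : Ω | ∀ i₁ ∈ S₁, ∀ i₂ ∈ S₂, ∀ i₂' ∈ S₂, i₂ ≠ i₂' → ∀ i₃ ∈ S₃,
            β * |∑ j, (x i₃ ω j + x i₁ ω j) * (x i₂ ω j + x i₂' ω j)| ≤
              |∑ j, (x i₃ ω j + x i₁ ω j) * (x i₃ ω j + x i₂ ω j)|}).toReal := by
  refine ⟨9, by norm_num, ?_⟩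
  intro d n hd hn Ω _ _ x hindep hmap S₁ S₂ S₃ h₁₂ h₁₃ h₂₃ β hβ δ hδ₀ hδ hc
  set t := (9 * β)⁻¹
  have hv : (Fintype.card (Fin d) : ℝ) * ((1 / d : ℝ≥0) : ℝ) = 1 := by
    simp [hd.ne']
  have hβt : 4 * β * t + 5 * t ≤ 1 := by
    rw [show 4 * β * t + 5 * t = (4 * β + 5) / (9 * β) by ring, div_le_one (by positivity)]
    linarith
  have hgood := one_sub_le_measureReal_nearOrthonormal hindep hmap hv (t := t) (by positivity)
    (by rw [inv_le_comm₀ (by positivity) (by norm_num)]; linarith)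
  simp only [Fintype.card_fin] at hgood
  have hsmall := three_mul_sq_mul_exp_le_of_le_sqrt (by omega) hd (by linarith) hδ₀ hδ hc
  refine le_trans (by linarith) (hgood.trans (measureReal_mono ?_))
  intro ω hω i₁ hi₁ i₂ hi₂ i₂' hi₂' _ i₃ hi₃
  exact hω.mul_abs_dotProduct_le (by linarith) hβt
    (ne_of_mem_of_not_mem hi₁ (Finset.disjoint_right.mp h₁₂ hi₂))
    (ne_of_mem_of_not_mem hi₁ (Finset.disjoint_right.mp h₁₂ hi₂'))
    (ne_of_mem_of_not_mem hi₁ (Finset.disjoint_right.mp h₁₃ hi₃))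
    (ne_of_mem_of_not_mem hi₃ (Finset.disjoint_left.mp h₂₃ hi₂))
    (ne_of_mem_of_not_mem hi₃ (Finset.disjoint_left.mp h₂₃ hi₂'))
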